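/- arXiv:1507.01245 — 2 statements merged into one kernel-verified Lean document; each statement's English description precedes it below -/
import Mathlib

section
/- Let T be a compact torus, E ≅ S^1 × S^1 a complex elliptic curve, and DD: 𝔄_T → T² the map sending a homomorphism a: X*(T) → E to the corresponding element of Hom(X*(T), S^1 × S^1) ≅ T². Then for any closed point a ∈ 𝔄_T with DD(a) = (s₁, s₂), the subgroup T(a) = ⋂_{a ∈ 𝔄_{T'}} T' equals the smallest closed subgroup of T containing both s₁ and s₂. -/
/-! STATEMENT 7: Pontrjagin duality description of `T(a)`.  We model the compact torus of
rank `n` as `T = Hom(X*(T), S¹)` with `X*(T) = ℤⁿ` and `S¹ = ℝ/ℤ`, the complex elliptic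
curve as `E ≅ S¹ × S¹`, and `𝔄_T = Hom(X*(T), E)`.  `DD : 𝔄_T → T²` sends a homomorphism
`a : X*(T) → E` to the pair `(s₁, s₂)` of its two `S¹`-components. -/

noncomputable section

abbrev TorusChar (n : ℕ) := Fin n → ℤ                         -- X*(T)
abbrev Torus (n : ℕ) := TorusChar n →+ AddCircle (1 : ℝ)      -- T = Hom(X*(T), S¹)
abbrev ECurve := AddCircle (1 : ℝ) × AddCircle (1 : ℝ)        -- E ≅ S¹ × S¹
abbrev AT (n : ℕ) := TorusChar n →+ ECurve                    -- 𝔄_T = Hom(X*(T), E)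

instance (n : ℕ) : TopologicalSpace (Torus n) :=
  TopologicalSpace.induced (fun f => (f : TorusChar n → AddCircle (1 : ℝ))) inferInstance

/-- `𝔄_{T'} ⊆ 𝔄_T` for a closed subgroup `T' < T`: the points killing every character of `T`
vanishing on `T'` (a lies in `𝔄_{T'}` iff `a : X*(T) → E` factors through `X*(T) ↠ X*(T')`). -/
def ASub (n : ℕ) (H : AddSubgroup (Torus n)) : Set (AT n) :=
  {a | ∀ lam : TorusChar n, (∀ t ∈ H, t lam = 0) → a lam = 0}

namespace Aux

variable {n : ℕ}

lemma torus_inducing (n : ℕ) :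
    Topology.IsInducing (fun f : Torus n => (f : TorusChar n → AddCircle (1 : ℝ))) := ⟨rfl⟩

lemma torus_embedding (n : ℕ) :
    Topology.IsEmbedding (fun f : Torus n => (f : TorusChar n → AddCircle (1 : ℝ))) :=
  ⟨torus_inducing n, fun _ _ h => DFunLike.coe_injective h⟩

lemma continuous_eval (lam : TorusChar n) : Continuous (fun t : Torus n => t lam) :=
  (continuous_apply lam).comp (torus_inducing n).continuous

instance : T2Space (Torus n) := (torus_embedding n).t2Space

instance : IsTopologicalAddGroup (Torus n) where
  continuous_add := by
    rw [(torus_inducing n).continuous_iff]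
    exact continuous_pi fun lam =>
      ((continuous_eval lam).comp continuous_fst).add ((continuous_eval lam).comp continuous_snd)
  continuous_neg := by
    rw [(torus_inducing n).continuous_iff]
    exact continuous_pi fun lam => (continuous_eval lam).neg

lemma isClosed_range_coe (n : ℕ) :
    IsClosed (Set.range (fun f : Torus n => (f : TorusChar n → AddCircle (1 : ℝ)))) := by
  have : Set.range (fun f : Torus n => (f : TorusChar n → AddCircle (1 : ℝ)))
      = ⋂ (x : TorusChar n), ⋂ (y : TorusChar n),
        {f : TorusChar n → AddCircle (1 : ℝ) | f (x + y) = f x + f y} := by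
    ext f
    simp only [Set.mem_range, Set.mem_iInter, Set.mem_setOf_eq]
    constructor
    · rintro ⟨g, rfl⟩ x y; exact g.map_add x y
    · intro h
      have h0 : f 0 = 0 := by
        have := h 0 0
        rw [add_zero] at this
        exact (left_eq_add.mp this)
      exact ⟨⟨⟨f, h0⟩, fun x y => h x y⟩, rfl⟩
  rw [this]
  exact isClosed_iInter fun x => isClosed_iInter fun y =>
    isClosed_eq (continuous_apply _) ((continuous_apply x).add (continuous_apply y))

instance : CompactSpace (Torus n) :=
  Topology.IsClosedEmbedding.compactSpace ⟨torus_embedding n, isClosed_range_coe n⟩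

instance : MeasurableSpace (Torus n) := borel _
instance : BorelSpace (Torus n) := ⟨rfl⟩

/-- The character of the torus attached to `lam`. -/
def chi (lam : TorusChar n) : C(Torus n, ℂ) :=
  ⟨fun t => (AddCircle.toCircle (t lam) : ℂ),
    continuous_subtype_val.comp (AddCircle.continuous_toCircle.comp (continuous_eval lam))⟩

lemma chi_apply (lam : TorusChar n) (t : Torus n) :
    chi lam t = (AddCircle.toCircle (t lam) : ℂ) := rfl

lemma chi_mul (lam mu : TorusChar n) : chi (lam + mu) = chi lam * chi mu := by
  ext t
  simp only [chi_apply, ContinuousMap.mul_apply, map_add]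
  rw [AddCircle.toCircle_add]; norm_cast

lemma chi_zero : (chi (0 : TorusChar n)) = 1 := by
  ext t
  simp [chi_apply, map_zero, AddCircle.toCircle_zero]

lemma chi_star (lam : TorusChar n) : star (chi lam) = chi (-lam) := by
  ext t
  simp only [ContinuousMap.star_apply, chi_apply, map_neg]
  have h1 : AddCircle.toCircle (-(t lam)) * AddCircle.toCircle (t lam) = 1 := by
    rw [← AddCircle.toCircle_add, neg_add_cancel, AddCircle.toCircle_zero]
  rw [eq_inv_of_mul_eq_one_left h1, Circle.coe_inv_eq_conj, Complex.star_def]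

lemma chi_eq_one_iff (lam : TorusChar n) (t : Torus n) : chi lam t = 1 ↔ t lam = 0 := by
  rw [chi_apply]
  constructor
  · intro h
    have : AddCircle.toCircle (t lam) = 1 := Circle.coe_injective (by simpa using h)
    exact AddCircle.injective_toCircle one_ne_zero
      (by rw [this, AddCircle.toCircle_zero])
  · intro h; rw [h, AddCircle.toCircle_zero, Circle.coe_one]


open MeasureTheory

/-- The monoid of characters. -/
def chiMonoid (n : ℕ) : Submonoid C(Torus n, ℂ) where
  carrier := Set.range (chi (n := n))
  one_mem' := ⟨0, chi_zero⟩
  mul_mem' := by rintro _ _ ⟨a, rfl⟩ ⟨b, rfl⟩; exact ⟨a + b, chi_mul a b⟩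

lemma star_range_chi (n : ℕ) :
    star (Set.range (chi (n := n))) = Set.range (chi (n := n)) := by
  ext f
  simp only [Set.mem_star, Set.mem_range]
  constructor
  · rintro ⟨l, hl⟩
    refine ⟨-l, ?_⟩
    have h1 : chi (-l) = star (star f) := by rw [← chi_star l, hl]
    rw [h1, star_star]
  · rintro ⟨l, rfl⟩
    exact ⟨-l, (chi_star l).symm⟩

lemma mem_span_chi {n : ℕ} {f : C(Torus n, ℂ)}
    (hf : f ∈ StarAlgebra.adjoin ℂ (Set.range (chi (n := n)))) :
    f ∈ Submodule.span ℂ (Set.range (chi (n := n))) := by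
  have h1 := StarAlgebra.adjoin_eq_span (R := ℂ) (Set.range (chi (n := n)))
  have h2 : (Set.range (chi (n := n)) ∪ star (Set.range (chi (n := n))))
      = Set.range (chi (n := n)) := by rw [star_range_chi, Set.union_self]
  rw [h2] at h1
  have h3 : Submonoid.closure (Set.range (chi (n := n))) = chiMonoid n :=
    Submonoid.closure_eq (chiMonoid n)
  rw [h3] at h1
  have h4 : f ∈ Subalgebra.toSubmodule (StarAlgebra.adjoin ℂ
      (Set.range (chi (n := n)))).toSubalgebra := hf
  rw [h1] at h4
  exact h4

lemma chi_sep (n : ℕ) :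
    (StarAlgebra.adjoin ℂ (Set.range (chi (n := n)))).SeparatesPoints := by
  intro x y hxy
  obtain ⟨lam, hlam⟩ := DFunLike.ne_iff.mp hxy
  refine ⟨_, ⟨chi lam, StarAlgebra.subset_adjoin ℂ _ ⟨lam, rfl⟩, rfl⟩, ?_⟩
  intro hEq
  exact hlam (AddCircle.injective_toCircle one_ne_zero (Circle.coe_injective hEq))

lemma chi_dense (n : ℕ) :
    closure ((StarAlgebra.adjoin ℂ (Set.range (chi (n := n)))) : Set C(Torus n, ℂ))
      = Set.univ := by
  have h := ContinuousMap.starSubalgebra_topologicalClosure_eq_top_of_separatesPoints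
    (StarAlgebra.adjoin ℂ (Set.range (chi (n := n)))) (chi_sep n)
  have h2 : ((StarAlgebra.adjoin ℂ (Set.range (chi (n := n)))).topologicalClosure
      : Set C(Torus n, ℂ)) = Set.univ := by rw [h]; rfl
  exact h2

lemma chi_add_arg {n : ℕ} (lam : TorusChar n) (x y : Torus n) :
    chi lam (x + y) = chi lam x * chi lam y := by
  simp only [chi_apply, AddMonoidHom.add_apply]
  rw [AddCircle.toCircle_add]; norm_cast

set_option maxHeartbeats 1000000 in
set_option synthInstance.maxHeartbeats 200000 in
lemma mem_of_ann {n : ℕ} (H : AddSubgroup (Torus n)) (hH : IsClosed (H : Set (Torus n)))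
    (s : Torus n) (hs : ∀ lam : TorusChar n, (∀ t ∈ H, t lam = 0) → s lam = 0) :
    s ∈ H := by
  by_contra hsH
  haveI : CompactSpace H := isCompact_iff_compactSpace.mp hH.isCompact
  haveI : BorelSpace H := Subtype.borelSpace (H : Set (Torus n))
  set μH : Measure H := Measure.addHaar with hμHdef
  haveI : IsFiniteMeasure μH := CompactSpace.isFiniteMeasure
  have hne : μH Set.univ ≠ 0 :=
    (IsOpen.measure_ne_zero μH isOpen_univ ⟨0, trivial⟩)
  -- integrability of continuous pullbacks
  have integ : ∀ (f : C(Torus n, ℂ)) (ρ : H → Torus n), Continuous ρ →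
      Integrable (fun h => f (ρ h)) μH := by
    intro f ρ hρ
    exact (f.continuous.comp hρ).integrable_of_hasCompactSupport
      ((isClosed_tsupport _).isCompact)
  -- continuity of the two integral functionals
  have contInt : ∀ (ρ : H → Torus n), Continuous ρ →
      Continuous (fun f : C(Torus n, ℂ) => ∫ h, f (ρ h) ∂μH) := by
    intro ρ hρ
    refine LipschitzWith.continuous (K := (μH Set.univ).toReal.toNNReal)
      (LipschitzWith.of_dist_le_mul ?_)
    intro f g
    have h1 : dist (∫ h, f (ρ h) ∂μH) (∫ h, g (ρ h) ∂μH)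
        = ‖∫ h, (f (ρ h) - g (ρ h)) ∂μH‖ := by
      rw [dist_eq_norm, integral_sub (integ f ρ hρ) (integ g ρ hρ)]
    rw [h1]
    have h2 : ‖∫ h, (f (ρ h) - g (ρ h)) ∂μH‖ ≤ dist f g * (μH Set.univ).toReal := by
      refine norm_integral_le_of_norm_le_const (Filter.Eventually.of_forall fun h => ?_)
      rw [← dist_eq_norm]
      exact ContinuousMap.dist_apply_le_dist _
    calc ‖∫ h, (f (ρ h) - g (ρ h)) ∂μH‖ ≤ dist f g * (μH Set.univ).toReal := h2
      _ = ((μH Set.univ).toReal.toNNReal : ℝ) * dist f g := by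
          rw [Real.coe_toNNReal _ ENNReal.toReal_nonneg, mul_comm]
  -- the set of functions with equal integrals
  set S : Set C(Torus n, ℂ) :=
    {f | ∫ h, f ((h : H) : Torus n) ∂μH = ∫ h, f (s + ((h : H) : Torus n)) ∂μH} with hSdef
  have hScl : IsClosed S :=
    isClosed_eq (contInt _ continuous_subtype_val)
      (contInt _ (continuous_const.add continuous_subtype_val))
  -- characters lie in S
  have hchi : ∀ lam : TorusChar n, chi lam ∈ S := by
    intro lam
    by_cases hcase : ∀ t ∈ H, t lam = 0
    · have h1 : ∀ h : H, chi lam ((h : Torus n)) = 1 := fun h =>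
        (chi_eq_one_iff lam _).mpr (hcase _ h.2)
      have h2 : chi lam s = 1 := (chi_eq_one_iff lam s).mpr (hs lam hcase)
      have h3 : ∀ h : H, chi lam (s + (h : Torus n)) = 1 := fun h => by
        rw [chi_add_arg, h2, h1, one_mul]
      simp only [hSdef, Set.mem_setOf_eq]
      simp_rw [h1, h3]
    · push_neg at hcase
      obtain ⟨h₀, h₀H, h₀ne⟩ := hcase
      have hc : chi lam h₀ ≠ 1 := fun hc => h₀ne ((chi_eq_one_iff lam h₀).mp hc)
      have hz : ∫ h, chi lam ((h : H) : Torus n) ∂μH = 0 := by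
        have inv := integral_add_right_eq_self (μ := μH)
          (fun h : H => chi lam ((h : H) : Torus n)) ⟨h₀, h₀H⟩
        have hmul : ∀ h : H, chi lam (((h + ⟨h₀, h₀H⟩ : H) : Torus n))
            = chi lam ((h : Torus n)) * chi lam h₀ := fun h => by
          rw [AddSubgroup.coe_add, chi_add_arg]
        simp_rw [hmul] at inv
        rw [integral_mul_const] at inv
        by_contra hnz
        exact hc (mul_left_cancel₀ hnz (by rw [inv, mul_one]))
      have hz2 : ∫ h, chi lam (s + ((h : H) : Torus n)) ∂μH = 0 := by
        have : ∀ h : H, chi lam (s + ((h : H) : Torus n))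
            = chi lam s * chi lam ((h : Torus n)) := fun h => chi_add_arg lam s _
        simp_rw [this]
        rw [integral_const_mul, hz, mul_zero]
      simp only [hSdef, Set.mem_setOf_eq]
      rw [hz, hz2]
  -- the span of characters lies in S
  have hspan : ∀ f ∈ Submodule.span ℂ (Set.range (chi (n := n))), f ∈ S := by
    intro f hf
    induction hf using Submodule.span_induction with
    | mem x hx => obtain ⟨lam, rfl⟩ := hx; exact hchi lam
    | zero => simp [hSdef]
    | add x y _ _ hx hy =>
        simp only [hSdef, Set.mem_setOf_eq] at hx hy ⊢
        simp only [ContinuousMap.add_apply]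
        rw [integral_add (integ x _ continuous_subtype_val) (integ y _ continuous_subtype_val),
          integral_add (integ x (fun h : H => s + (h : Torus n)) (continuous_const.add continuous_subtype_val))
            (integ y (fun h : H => s + (h : Torus n)) (continuous_const.add continuous_subtype_val)), hx, hy]
    | smul c x _ hx =>
        simp only [hSdef, Set.mem_setOf_eq] at hx ⊢
        simp only [ContinuousMap.smul_apply]
        rw [integral_smul, integral_smul, hx]
  -- hence S is everything
  have hSuniv : ∀ f : C(Torus n, ℂ), f ∈ S := by
    intro f
    have h1 : ((StarAlgebra.adjoin ℂ (Set.range (chi (n := n)))) : Set C(Torus n, ℂ)) ⊆ S :=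
      fun g hg => hspan g (mem_span_chi hg)
    have h2 : closure ((StarAlgebra.adjoin ℂ (Set.range (chi (n := n))))
        : Set C(Torus n, ℂ)) ⊆ S := by
      rw [← hScl.closure_eq]; exact closure_mono h1
    rw [chi_dense n] at h2
    exact h2 trivial
  -- Urysohn function separating H from s + H
  have hKcl : IsClosed ((fun x => s + x) '' (H : Set (Torus n))) :=
    ((Homeomorph.addLeft s).isClosedMap) _ hH
  have hdisj : Disjoint (H : Set (Torus n)) ((fun x => s + x) '' (H : Set (Torus n))) := by
    rw [Set.disjoint_left]
    rintro x hx ⟨h, hh, rfl⟩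
    exact hsH (by simpa using H.sub_mem hx hh)
  obtain ⟨F, hF0, hF1, hF01⟩ := exists_continuous_zero_one_of_isClosed hH hKcl hdisj
  set G : C(Torus n, ℂ) :=
    (ContinuousMap.mk Complex.ofReal Complex.continuous_ofReal).comp F with hGdef
  have hmem := hSuniv G
  have e0 : ∫ h, G ((h : H) : Torus n) ∂μH = 0 := by
    have : ∀ h : H, G ((h : H) : Torus n) = 0 := fun h => by
      simp [hGdef, hF0 h.2]
    simp_rw [this]; simp
  have e1 : ∫ h, G (s + ((h : H) : Torus n)) ∂μH = ((μH Set.univ).toReal : ℂ) := by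
    have : ∀ h : H, G (s + ((h : H) : Torus n)) = 1 := fun h => by
      simp [hGdef, hF1 ⟨(h : Torus n), h.2, rfl⟩]
    simp_rw [this]
    simp [integral_const]
    rfl
  rw [hSdef] at hmem
  simp only [Set.mem_setOf_eq] at hmem
  rw [e0, e1] at hmem
  have : (μH Set.univ).toReal = 0 := by exact_mod_cast hmem.symm
  exact (ENNReal.toReal_ne_zero.mpr ⟨hne, measure_ne_top _ _⟩) this

end Aux

/-- For a closed point `a ∈ 𝔄_T` with `DD(a) = (s₁, s₂)`, the subgroup
`T(a) = ⋂_{a ∈ 𝔄_{T'}} T'` (intersection over closed subgroups) equals the smallest closed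
subgroup of `T` containing both `s₁` and `s₂`. -/
theorem stmt7 (n : ℕ) (a : AT n) :
    IsLeast
      {H : AddSubgroup (Torus n) |
        IsClosed (H : Set (Torus n)) ∧
        ((AddMonoidHom.fst (AddCircle (1 : ℝ)) (AddCircle (1 : ℝ))).comp a ∈ H) ∧  -- s₁ ∈ H
        ((AddMonoidHom.snd (AddCircle (1 : ℝ)) (AddCircle (1 : ℝ))).comp a ∈ H)}   -- s₂ ∈ H
      (sInf {H : AddSubgroup (Torus n) | IsClosed (H : Set (Torus n)) ∧ a ∈ ASub n H}) := by
  constructor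
  · refine ⟨?_, ?_, ?_⟩
    · have hcoe : ((sInf {H : AddSubgroup (Torus n) |
          IsClosed (H : Set (Torus n)) ∧ a ∈ ASub n H} : AddSubgroup (Torus n))
          : Set (Torus n))
          = ⋂ H ∈ {H : AddSubgroup (Torus n) | IsClosed (H : Set (Torus n)) ∧ a ∈ ASub n H},
            (H : Set (Torus n)) := by
        rw [AddSubgroup.coe_sInf]
      rw [hcoe]
      exact isClosed_biInter fun H hH => hH.1
    · rw [AddSubgroup.mem_sInf]
      intro H hH
      refine Aux.mem_of_ann H hH.1 _ (fun lam h => ?_)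
      have h0 := hH.2 lam h
      simp [AddMonoidHom.comp_apply, h0]
    · rw [AddSubgroup.mem_sInf]
      intro H hH
      refine Aux.mem_of_ann H hH.1 _ (fun lam h => ?_)
      have h0 := hH.2 lam h
      simp [AddMonoidHom.comp_apply, h0]
  · intro H hH
    apply sInf_le
    refine ⟨hH.1, fun lam h => ?_⟩
    have e1 := h _ hH.2.1
    have e2 := h _ hH.2.2
    simp only [AddMonoidHom.comp_apply, AddMonoidHom.coe_fst, AddMonoidHom.coe_snd] at e1 e2
    exact Prod.ext e1 e2

end
end

section
/- Let Λ be a semisimple root datum with Weyl group W and roots Σ, E a complex elliptic curve, 𝔄 = E ⊗_Z (Γ ⊕ Λ^∨). Define the elliptic Demazure operator X_α = ϑ(χ_α)^{-1} − ϑ(χ_α)^{-1} δ_α. Then: (1) δ_w X_α δ_{w^{-1}} = X_{w(α)} for all w ∈ W; (2) for any local section σ of S = π_* O_𝔄, X_α σ − s_α(σ) X_α = Δ_α(σ) where Δ_α(σ) = (σ − s_α σ)/ϑ(χ_α); and (3) X_α² = 0. -/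
/-- Properties of the elliptic Demazure operators
`X_α = ϑ(χ_α)^{-1} - ϑ(χ_α)^{-1} δ_α`, realized as operators on the sheaf `S = π_* O_𝔄`
(whose local sections are modeled as functions `𝔄 → k`):
(1) `δ_w X_α δ_{w⁻¹} = X_{w(α)}`;
(2) `X_α σ - s_α(σ) X_α = Δ_α(σ)` where `Δ_α(σ) = (σ - s_α σ)/ϑ(χ_α)`;
(3) `X_α² = 0`. -/
theorem stmt9 {𝔄 k : Type*} [Field k] {W : Type*} [Group W] [MulAction W 𝔄]
    {Rt : Type*}
    (s : Rt → W)                       -- the reflections s_α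
    (hs : ∀ α, s α * s α = 1)
    (wact : W → Rt → Rt)               -- the W-action on roots
    (neg : Rt → Rt)                    -- α ↦ -α
    (hneg : ∀ α, wact (s α) α = neg α)
    (hsw : ∀ (w : W) (α : Rt), s (wact w α) = w * s α * w⁻¹)
    (θ : Rt → 𝔄 → k)                   -- the theta sections ϑ(χ_α)
    (hθW : ∀ (w : W) (α : Rt) (x : 𝔄), θ (wact w α) (w • x) = θ α x)
    (hθneg : ∀ (α : Rt) (x : 𝔄), θ (neg α) x = - θ α x)
    -- the elliptic Demazure operators X_α and the group elements δ_w
    (X : Rt → (𝔄 → k) → (𝔄 → k))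
    (hX : ∀ (α : Rt) (f : 𝔄 → k) (x : 𝔄), X α f x = (f x - f (s α • x)) / θ α x)
    (δ : W → (𝔄 → k) → (𝔄 → k))
    (hδ : ∀ (w : W) (f : 𝔄 → k) (x : 𝔄), δ w f x = f (w⁻¹ • x)) :
    -- (1) δ_w X_α δ_{w⁻¹} = X_{w(α)}
    (∀ (w : W) (α : Rt) (f : 𝔄 → k), δ w (X α (δ w⁻¹ f)) = X (wact w α) f) ∧
    -- (2) X_α σ - s_α(σ) X_α = Δ_α(σ)
    (∀ (α : Rt) (σ f : 𝔄 → k) (x : 𝔄),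
      X α (σ * f) x - δ (s α) σ x * X α f x = (σ x - σ (s α • x)) / θ α x * f x) ∧
    -- (3) X_α² = 0
    (∀ (α : Rt) (f : 𝔄 → k), X α (X α f) = 0) := by
  have hinv : ∀ (α : Rt) (x : 𝔄), s α • s α • x = x := by
    intro α x
    rw [← mul_smul, hs, one_smul]
  have hθs : ∀ (α : Rt) (x : 𝔄), θ α (s α • x) = - θ α x := by
    intro α x
    have h1 := hθW (s α) α x
    rw [hneg, hθneg] at h1
    linear_combination -h1
  refine ⟨?_, ?_, ?_⟩
  · intro w α f
    funext x
    rw [hδ, hX, hX, hδ, hδ, hsw]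
    have hθ' : θ (wact w α) x = θ α (w⁻¹ • x) := by
      have := hθW w α (w⁻¹ • x)
      rwa [smul_inv_smul] at this
    rw [hθ']
    simp only [inv_inv, smul_inv_smul, ← mul_smul, mul_inv_cancel, one_smul, mul_assoc]
  · intro α σ f x
    rw [hX, hX, hδ]
    have h1 : (s α)⁻¹ = s α := by
      rw [inv_eq_iff_mul_eq_one, hs]
    rw [h1]
    simp only [Pi.mul_apply]
    rw [← mul_div_assoc, ← sub_div, div_mul_eq_mul_div]
    congr 1
    ring
  · intro α f
    funext x
    rw [hX, hX, hX, hinv, hθs]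
    have h2 : (f (s α • x) - f x) / -θ α x = (f x - f (s α • x)) / θ α x := by
      rw [div_neg, neg_div', neg_sub]
    rw [h2, sub_self, zero_div, Pi.zero_apply]
end
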